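/- A live NFA G with no unobservable cycles is concealable with respect to P and E_S = {s} if and only if its diagnoser G_d contains no secret cycle (no cycle all of whose states consist solely of pairs labeled S). -/

import Mathlib

variable {X E : Type}

def nstep (f : X → E → Set X) (S : Set X) (a : E) : Set X :=
  {y | ∃ x ∈ S, y ∈ f x a}

def nsteps (f : X → E → Set X) (S : Set X) (w : List E) : Set X :=
  w.foldl (nstep f) S

def lang (f : X → E → Set X) (x0 : X) : Set (List E) :=
  {w | (nsteps f {x0} w).Nonempty}

def proj (obs : E → Bool) (w : List E) : List E := w.filter obs

def dstep [DecidableEq E] (f : X → E → Set X) (obs : E → Bool) (s : E)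
    (q : Set (X × Bool)) (e : E) : Set (X × Bool) :=
  {p | ∃ xl ∈ q, ∃ w : List E,
    proj obs w = [e] ∧ p.1 ∈ nsteps f {xl.1} w ∧ p.2 = (xl.2 || decide (s ∈ w))}

def dinit [DecidableEq E] (f : X → E → Set X) (obs : E → Bool) (s : E) (x0 : X) :
    Set (X × Bool) :=
  {p | ∃ w : List E, proj obs w = [] ∧ p.1 ∈ nsteps f {x0} w ∧ p.2 = decide (s ∈ w)}

def druns [DecidableEq E] (f : X → E → Set X) (obs : E → Bool) (s : E)
    (q : Set (X × Bool)) (ω : List E) : Set (X × Bool) :=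
  ω.foldl (dstep f obs s) q

/-
The diagnoser state after an observation ω is the set of pairs (x, [s ∈ λ]) over the runs λ of G
with P(λ) = ω ending in x. Concealability thus says that every nonempty reachable diagnoser state
contains a pair labelled N, which rules out secret cycles. Conversely, if some λ containing s
cannot be concealed, the diagnoser state after P(λ) is secret, and so is every state reached from
it. Liveness and the absence of unobservable cycles let every nonempty reachable state be continued
by an observable event, so the finiteness of the diagnoser forces a cycle among these secret states.
-/

theorem exists_foldl_append_eq_foldl {α β : Type*} [Finite α] (step : α → β → α)
    (P : α → Prop) (hP : ∀ b, P b → ∃ e, P (step b e)) (a : α) (ha : P a) :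
    ∃ u v : List β, v ≠ [] ∧ P (u.foldl step a) ∧ (u ++ v).foldl step a = u.foldl step a := by
  have : Nonempty β := let ⟨e, _⟩ := hP a ha; ⟨e⟩
  choose! g hg using hP
  set T : α → α := fun b => step b (g b)
  have hword : ∀ n b, ∃ w : List β, w.length = n ∧ w.foldl step b = T^[n] b := by
    intro n
    induction n with
    | zero => exact fun b => ⟨[], rfl, rfl⟩
    | succ n ih =>
      intro b
      obtain ⟨w, hlen, hw⟩ := ih (T b)
      exact ⟨g b :: w, by simp [hlen], hw⟩
  obtain ⟨i, j, hij, hT⟩ := Finite.exists_ne_map_eq_of_infinite fun n => T^[n] a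
  wlog hlt : i < j generalizing i j
  · exact this j i hij.symm hT.symm (by omega)
  obtain ⟨u, -, hu⟩ := hword i a
  obtain ⟨v, hvlen, hv⟩ := hword (j - i) (T^[i] a)
  refine ⟨u, v, ?_, ?_, ?_⟩
  · exact List.ne_nil_of_length_pos (by omega)
  · rw [hu]
    exact Function.Iterate.rec P ha hg i
  · rw [List.foldl_append, hu, hv, ← Function.iterate_add_apply, Nat.sub_add_cancel hlt.le]
    exact hT.symm

section Diagnoser

variable (f : X → E → Set X) (obs : E → Bool)

theorem nsteps_append (S : Set X) (u v : List E) :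
    nsteps f S (u ++ v) = nsteps f (nsteps f S u) v :=
  List.foldl_append

theorem mem_nsteps_iff (S : Set X) (w : List E) (y : X) :
    y ∈ nsteps f S w ↔ ∃ x ∈ S, y ∈ nsteps f {x} w := by
  induction w generalizing S with
  | nil => simp [nsteps]
  | cons a w ih =>
    change y ∈ nsteps f (nstep f S a) w ↔ ∃ x ∈ S, y ∈ nsteps f (nstep f {x} a) w
    rw [ih]
    constructor
    · rintro ⟨z, ⟨x, hx, hz⟩, hy⟩
      exact ⟨x, hx, (ih _).mpr ⟨z, ⟨x, rfl, hz⟩, hy⟩⟩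
    · rintro ⟨x, hx, hy⟩
      obtain ⟨z, ⟨x', hx', hz⟩, hzy⟩ := (ih _).mp hy
      exact ⟨z, ⟨x, hx, (Set.mem_singleton_iff.mp hx') ▸ hz⟩, hzy⟩

theorem exists_append_proj_eq_singleton {x0 : X}
    (hlive : ∀ w ∈ lang f x0, ∃ a : E, w ++ [a] ∈ lang f x0) {N : ℕ}
    (hN : ∀ u w : List E, u ++ w ∈ lang f x0 → (∀ a ∈ w, obs a = false) → w.length ≤ N)
    (lam w : List E) (hw : ∀ a ∈ w, obs a = false) (hmem : lam ++ w ∈ lang f x0) :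
    ∃ μ e, proj obs μ = [e] ∧ lam ++ μ ∈ lang f x0 := by
  obtain ⟨a, ha⟩ := hlive _ hmem
  rw [List.append_assoc] at ha
  cases hobs : obs a
  · have hwa : ∀ b ∈ w ++ [a], obs b = false := by
      simp only [List.mem_append, List.mem_singleton]
      rintro b (hb | rfl)
      exacts [hw b hb, hobs]
    have hlen := hN lam _ ha hwa
    exact exists_append_proj_eq_singleton hlive hN lam (w ++ [a]) hwa ha
  · have hwnil : w.filter obs = [] := List.filter_eq_nil_iff.mpr fun b hb => by simp [hw b hb]
    refine ⟨w ++ [a], a, ?_, ha⟩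
    simp [proj, hwnil, hobs]
termination_by N - w.length
decreasing_by simp only [List.length_append, List.length_singleton] at hlen ⊢; omega

variable [DecidableEq E] (s : E)

theorem druns_append (q : Set (X × Bool)) (u v : List E) :
    druns f obs s q (u ++ v) = druns f obs s (druns f obs s q u) v :=
  List.foldl_append

theorem mem_druns_dinit_iff (x0 : X) (ω : List E) (p : X × Bool) :
    p ∈ druns f obs s (dinit f obs s x0) ω ↔
      ∃ lam : List E, proj obs lam = ω ∧ p.1 ∈ nsteps f {x0} lam ∧ p.2 = decide (s ∈ lam) := by
  induction ω using List.reverseRecOn generalizing p with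
  | nil => exact Iff.rfl
  | append_singleton ω e ih =>
    rw [druns_append]
    change p ∈ dstep f obs s _ e ↔ _
    constructor
    · rintro ⟨xl, hxl, w, hw, hpw, hp⟩
      obtain ⟨lam, hlam, hx, hxl2⟩ := (ih xl).mp hxl
      refine ⟨lam ++ w, ?_, ?_, ?_⟩
      · simp only [proj, List.filter_append] at hlam hw ⊢
        rw [hlam, hw]
      · rw [nsteps_append, mem_nsteps_iff]
        exact ⟨xl.1, hx, hpw⟩
      · simp [hp, hxl2]
    · rintro ⟨lam, hlam, hx, hp⟩
      obtain ⟨l1, l2, rfl, hl1, hl2⟩ := List.filter_eq_append_iff.mp hlam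
      obtain ⟨z, hz, hpz⟩ := (mem_nsteps_iff f _ _ _).mp ((nsteps_append f _ _ _) ▸ hx)
      exact ⟨(z, decide (s ∈ l1)), (ih _).mpr ⟨l1, hl1, hz, rfl⟩, l2, hl2, hpz, by simp [hp]⟩

theorem druns_secret {q : Set (X × Bool)} (hq : ∀ p ∈ q, p.2 = true) (ω : List E) :
    ∀ p ∈ druns f obs s q ω, p.2 = true := by
  induction ω using List.reverseRecOn with
  | nil => exact hq
  | append_singleton ω e ih =>
    rw [druns_append]
    rintro p ⟨xl, hxl, w, -, -, hp⟩
    simp [hp, ih xl hxl]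

end Diagnoser

def Concealable (f : X → E → Set X) (obs : E → Bool) (s : E) (x0 : X) : Prop :=
  ∀ lam ∈ lang f x0, s ∈ lam → ∃ lam' ∈ lang f x0, proj obs lam' = proj obs lam ∧ s ∉ lam'

def HasSecretCycle [DecidableEq E] (f : X → E → Set X) (obs : E → Bool) (s : E) (x0 : X) :
    Prop :=
  ∃ u v : List E, v ≠ [] ∧
    (druns f obs s (dinit f obs s x0) u).Nonempty ∧
    druns f obs s (dinit f obs s x0) (u ++ v) = druns f obs s (dinit f obs s x0) u ∧
    (∀ w : List E, w <+: v → ∀ p ∈ druns f obs s (dinit f obs s x0) (u ++ w), p.2 = true)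

section Concealability

variable [DecidableEq E] {f : X → E → Set X} {obs : E → Bool} {s : E} {x0 : X}

theorem exists_nonsecret_mem_druns (hC : Concealable f obs s x0) {ω : List E} {p : X × Bool}
    (hp : p ∈ druns f obs s (dinit f obs s x0) ω) :
    ∃ x, (x, false) ∈ druns f obs s (dinit f obs s x0) ω := by
  obtain ⟨lam, hlam, hx, -⟩ := (mem_druns_dinit_iff f obs s x0 ω p).mp hp
  by_cases hs : s ∈ lam
  · obtain ⟨lam', ⟨x, hx'⟩, hproj, hs'⟩ := hC lam ⟨p.1, hx⟩ hs
    exact ⟨x, (mem_druns_dinit_iff f obs s x0 ω _).mpr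
      ⟨lam', hproj.trans hlam, hx', by simp [hs']⟩⟩
  · exact ⟨p.1, (mem_druns_dinit_iff f obs s x0 ω _).mpr ⟨lam, hlam, hx, by simp [hs]⟩⟩

theorem not_hasSecretCycle_of_concealable (hC : Concealable f obs s x0) :
    ¬ HasSecretCycle f obs s x0 := by
  rintro ⟨u, v, -, ⟨p, hp⟩, -, hsecret⟩
  obtain ⟨x, hx⟩ := exists_nonsecret_mem_druns hC hp
  simpa using hsecret [] List.nil_prefix (x, false) (by simpa using hx)

theorem exists_druns_append_singleton_nonempty
    (hlive : ∀ w ∈ lang f x0, ∃ a : E, w ++ [a] ∈ lang f x0) {N : ℕ}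
    (hN : ∀ u w : List E, u ++ w ∈ lang f x0 → (∀ a ∈ w, obs a = false) → w.length ≤ N)
    {ω : List E} (hω : (druns f obs s (dinit f obs s x0) ω).Nonempty) :
    ∃ e, (druns f obs s (dinit f obs s x0) (ω ++ [e])).Nonempty := by
  obtain ⟨p, hp⟩ := hω
  obtain ⟨lam, hlam, hx, -⟩ := (mem_druns_dinit_iff f obs s x0 ω p).mp hp
  obtain ⟨μ, e, hμ, y, hy⟩ := exists_append_proj_eq_singleton f obs hlive hN lam [] (by simp)
    (by rw [List.append_nil]; exact ⟨p.1, hx⟩)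
  refine ⟨e, (y, decide (s ∈ lam ++ μ)),
    (mem_druns_dinit_iff f obs s x0 _ _).mpr ⟨lam ++ μ, ?_, hy, rfl⟩⟩
  simp only [proj, List.filter_append] at hlam hμ ⊢
  rw [hlam, hμ]

theorem concealable_of_not_hasSecretCycle [Finite X]
    (hlive : ∀ w ∈ lang f x0, ∃ a : E, w ++ [a] ∈ lang f x0) {N : ℕ}
    (hN : ∀ u w : List E, u ++ w ∈ lang f x0 → (∀ a ∈ w, obs a = false) → w.length ≤ N)
    (hcyc : ¬ HasSecretCycle f obs s x0) : Concealable f obs s x0 := by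
  intro lam hlam hs
  by_contra! hno
  set D := druns f obs s (dinit f obs s x0)
  have hsecret : ∀ p ∈ D (proj obs lam), p.2 = true := by
    intro p hp
    obtain ⟨lam', hproj, hx, hp2⟩ := (mem_druns_dinit_iff f obs s x0 _ p).mp hp
    simpa [hp2] using hno lam' ⟨p.1, hx⟩ hproj
  have hstart : (D (proj obs lam)).Nonempty := by
    obtain ⟨x, hx⟩ := hlam
    exact ⟨(x, decide (s ∈ lam)), (mem_druns_dinit_iff f obs s x0 _ _).mpr ⟨lam, rfl, hx, rfl⟩⟩
  have hcont : ∀ b, (∃ ω, b = D ω ∧ b.Nonempty) →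
      ∃ e, ∃ ω, dstep f obs s b e = D ω ∧ (dstep f obs s b e).Nonempty := by
    rintro _ ⟨ω, rfl, hne⟩
    obtain ⟨e, he⟩ := exists_druns_append_singleton_nonempty hlive hN hne
    have hde : dstep f obs s (D ω) e = D (ω ++ [e]) := (druns_append f obs s _ ω [e]).symm
    exact ⟨e, ω ++ [e], hde, hde ▸ he⟩
  obtain ⟨u, v, hv, ⟨-, -, hne⟩, hloop⟩ :=
    exists_foldl_append_eq_foldl (dstep f obs s) _ hcont (D (proj obs lam)) ⟨_, rfl, hstart⟩
  refine hcyc ⟨proj obs lam ++ u, v, hv, ?_, ?_, fun w _ p hp => ?_⟩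
  · rw [druns_append]
    exact hne
  · rw [List.append_assoc, druns_append, druns_append f obs s _ (proj obs lam) u]
    exact hloop
  · rw [List.append_assoc, druns_append] at hp
    exact druns_secret f obs s hsecret (u ++ w) p hp

end Concealability

theorem concealable_iff_no_secret_cycle_general [DecidableEq E] [Fintype X]
    (f : X → E → Set X) (obs : E → Bool) (s : E) (x0 : X)
    (hlive : ∀ w ∈ lang f x0, ∃ a : E, w ++ [a] ∈ lang f x0)
    (hnuc : ∃ N : ℕ, ∀ u w : List E, u ++ w ∈ lang f x0 →
      (∀ a ∈ w, obs a = false) → w.length ≤ N) :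
    (∀ lam ∈ lang f x0, s ∈ lam →
        ∃ lam' ∈ lang f x0, proj obs lam' = proj obs lam ∧ s ∉ lam') ↔
      ¬ (∃ u v : List E, v ≠ [] ∧
          (druns f obs s (dinit f obs s x0) u).Nonempty ∧
          druns f obs s (dinit f obs s x0) (u ++ v) = druns f obs s (dinit f obs s x0) u ∧
          (∀ w : List E, w <+: v →
            ∀ p ∈ druns f obs s (dinit f obs s x0) (u ++ w), p.2 = true)) := by
  obtain ⟨N, hN⟩ := hnuc
  exact ⟨not_hasSecretCycle_of_concealable, concealable_of_not_hasSecretCycle hlive hN⟩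

/-- G is concealable iff the diagnoser has no secret cycle. -/
theorem concealable_iff_no_secret_cycle [DecidableEq E] [Fintype X]
    (f : X → E → Set X) (obs : E → Bool) (s : E) (x0 : X)
    (hobs : obs s = false)
    (hlive : ∀ w ∈ lang f x0, ∃ a : E, w ++ [a] ∈ lang f x0)
    (hnuc : ∃ N : ℕ, ∀ u w : List E, u ++ w ∈ lang f x0 →
      (∀ a ∈ w, obs a = false) → w.length ≤ N) :
    (∀ lam ∈ lang f x0, s ∈ lam →
        ∃ lam' ∈ lang f x0, proj obs lam' = proj obs lam ∧ s ∉ lam') ↔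
      ¬ (∃ u v : List E, v ≠ [] ∧
          (druns f obs s (dinit f obs s x0) u).Nonempty ∧
          druns f obs s (dinit f obs s x0) (u ++ v) = druns f obs s (dinit f obs s x0) u ∧
          (∀ w : List E, w <+: v →
            ∀ p ∈ druns f obs s (dinit f obs s x0) (u ++ w), p.2 = true)) :=
  concealable_iff_no_secret_cycle_general f obs s x0 hlive hnuc
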